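/- Suppose (a*, b*) ∈ (0,∞) × (0,∞) satisfies ∂J/∂a(a*,b*) = 0 and ∂J/∂b(a*,b*) = 0. Then the mixed second partial derivative vanishes there: ∂²J/∂a∂b(a*,b*) = ∂²J/∂b∂a(a*,b*) = 0. -/

import Mathlib

/-!
Both the numerator `c γ(b) - λ k m(a)` and the denominator `D(a, b)` of `J` are sums of a function
of `a` and a function of `b`. For such a quotient `N / D` the mixed partial is
`(N_a D_b - N_b D_a) / D²` plus a multiple of the first-order expression `N_a D - N D_a`, and at a
critical point `N_a D = N D_a`, `N_b D = N D_b` force `(N_a D_b - N_b D_a) D = 0`.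
-/

open Filter Topology

theorem deriv_deriv_eq_zero_of_separable {J : ℝ → ℝ → ℝ} {f g u v : ℝ → ℝ} {a b : ℝ}
    (hJ : ∀ x y, J x y = (f x + g y) / (u x + v y))
    (hf : DifferentiableAt ℝ f a) (hu : DifferentiableAt ℝ u a)
    (hg : DifferentiableAt ℝ g b) (hv : DifferentiableAt ℝ v b) (hD : u a + v b ≠ 0)
    (hJa : deriv (fun x => J x b) a = 0) (hJb : deriv (fun y => J a y) b = 0) :
    deriv (fun y => deriv (fun x => J x y) a) b = 0 := by
  obtain rfl : J = fun x y => (f x + g y) / (u x + v y) := funext fun x => funext (hJ x)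
  set f' := deriv f a
  set u' := deriv u a
  set g' := deriv g b
  set v' := deriv v b
  have hderiv_a : ∀ y, u a + v y ≠ 0 → deriv (fun x => (f x + g y) / (u x + v y)) a
      = (f' * (u a + v y) - (f a + g y) * u') / (u a + v y) ^ 2 := fun y hy =>
    ((hf.hasDerivAt.add_const (g y)).fun_div (hu.hasDerivAt.add_const (v y)) hy).deriv
  have hderiv_b : deriv (fun y => (f a + g y) / (u a + v y)) b
      = (g' * (u a + v b) - (f a + g b) * v') / (u a + v b) ^ 2 :=
    ((hg.hasDerivAt.const_add (f a)).fun_div (hv.hasDerivAt.const_add (u a)) hD).deriv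
  have hcrit_a : f' * (u a + v b) - (f a + g b) * u' = 0 := by
    simpa [hderiv_a b hD, hD] using hJa
  have hcrit_b : g' * (u a + v b) - (f a + g b) * v' = 0 := by
    simpa [hderiv_b, hD] using hJb
  have hcross : f' * v' - g' * u' = 0 := by
    refine (mul_eq_zero.mp ?_).resolve_right hD
    linear_combination v' * hcrit_a - u' * hcrit_b
  have hDb : HasDerivAt (fun y => u a + v y) v' b := hv.hasDerivAt.const_add (u a)
  have hnear : (fun y => deriv (fun x => (f x + g y) / (u x + v y)) a)
      =ᶠ[𝓝 b] fun y => (f' * (u a + v y) - (f a + g y) * u') / (u a + v y) ^ 2 :=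
    (hDb.continuousAt.eventually_ne hD).mono hderiv_a
  have hnum : HasDerivAt (fun y => f' * (u a + v y) - (f a + g y) * u') (f' * v' - g' * u') b :=
    (hDb.const_mul f').sub (hg.hasDerivAt.const_add (f a) |>.mul_const u')
  rw [hnear.deriv_eq,
    (hnum.fun_div (hDb.fun_pow 2) (pow_ne_zero 2 hD)).deriv, hcross, hcrit_a]
  simp

lemma mul_exp_sub_mul_exp_pos {Φ ρ : ℝ} (hΦ : 0 < Φ) (hρ : ρ < 0) (b : ℝ) :
    0 < Φ * Real.exp (Φ * b) - ρ * Real.exp (ρ * b) := by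
  nlinarith [Real.exp_pos (Φ * b), Real.exp_pos (ρ * b)]

lemma exp_mul_sub_exp_mul_nonneg {Φ ρ b : ℝ} (h : ρ ≤ Φ) (hb : 0 ≤ b) :
    0 ≤ Real.exp (Φ * b) - Real.exp (ρ * b) :=
  sub_nonneg.mpr (Real.exp_le_exp.mpr (mul_le_mul_of_nonneg_right h hb))

theorem stmt18_general (c α lam q μ k : ℝ)
    (hα0 : 0 < α)
    (hlam : 0 < lam) (hq : 0 < q) (hμ : 0 < μ)
    (Φ ρ : ℝ)
    (hΦpos : 0 < Φ) (hρneg : ρ < 0)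
    (γ θf m : ℝ → ℝ) (D J : ℝ → ℝ → ℝ)
    (hγ : ∀ b, γ b = (Φ - ρ)/(Φ*Real.exp (Φ*b) - ρ*Real.exp (ρ*b)))
    (hθf : ∀ b, θf b = (Real.exp (Φ*b) - Real.exp (ρ*b))/(Φ*Real.exp (Φ*b) - ρ*Real.exp (ρ*b)))
    (hm : ∀ a, m a = (1 - Real.exp (-(μ/α)*a)*((μ/α)*a + 1))/(μ/α))
    (hD : ∀ a b, D a b = q + (μ/α)*q*θf b + lam*Real.exp (-(μ/α)*a))
    (hJ : ∀ a b, J a b = (c*γ b - lam*k*m a)/(D a b)) :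
    ∀ astar bstar : ℝ, 0 < astar → 0 < bstar →
      deriv (fun a => J a bstar) astar = 0 →
      deriv (fun b => J astar b) bstar = 0 →
      deriv (fun b => deriv (fun a => J a b) astar) bstar = 0 ∧
      deriv (fun a => deriv (fun b => J a b) bstar) astar = 0 := by
  intro astar bstar _ hbstar hJa hJb
  have hsep : ∀ a b, J a b = ((fun a => -(lam * k * m a)) a + (fun b => c * γ b) b)
      / ((fun a => lam * Real.exp (-(μ/α) * a)) a + (fun b => q + (μ/α) * q * θf b) b) := by
    intro a b
    rw [hJ, hD]
    ring
  have hE := mul_exp_sub_mul_exp_pos hΦpos hρneg bstar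
  have hγd : DifferentiableAt ℝ (fun b => c * γ b) bstar := by
    simp only [hγ]
    fun_prop (disch := exact hE.ne')
  have hθd : DifferentiableAt ℝ (fun b => q + (μ/α) * q * θf b) bstar := by
    simp only [hθf]
    fun_prop (disch := exact hE.ne')
  have hmd : DifferentiableAt ℝ (fun a => -(lam * k * m a)) astar := by
    simp only [hm]
    fun_prop
  have hexpd : DifferentiableAt ℝ (fun a => lam * Real.exp (-(μ/α) * a)) astar := by fun_prop
  have hθ : 0 ≤ θf bstar := by
    rw [hθf]
    exact div_nonneg (exp_mul_sub_exp_mul_nonneg (hρneg.trans hΦpos).le hbstar.le) hE.le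
  have hDpos : 0 < lam * Real.exp (-(μ/α) * astar) + (q + (μ/α) * q * θf bstar) := by
    positivity
  exact ⟨deriv_deriv_eq_zero_of_separable hsep hmd hexpd hγd hθd hDpos.ne' hJa hJb,
    deriv_deriv_eq_zero_of_separable (J := fun b a => J a b)
      (fun b a => by rw [hsep, add_comm (-(lam * k * m a)), add_comm (lam * _)])
      hγd hθd hmd hexpd (by linarith) hJb hJa⟩

theorem stmt18 (c α lam q μ k : ℝ)
    (hc : 0 < c) (hα0 : 0 < α) (hα1 : α ≤ 1)
    (hlam : 0 < lam) (hq : 0 < q) (hμ : 0 < μ) (hk : 1 ≤ k)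
    (Δ Φ ρ : ℝ)
    (hΔ : Δ = (c*μ - α*lam - α*q)^2 + 4*α*c*μ*q)
    (hΦ : Φ = (-(c*μ - α*lam - α*q) + Real.sqrt Δ) / (2*α*c))
    (hρ : ρ = (-(c*μ - α*lam - α*q) - Real.sqrt Δ) / (2*α*c))
    (hΦpos : 0 < Φ) (hρneg : ρ < 0)
    (γ θf m : ℝ → ℝ) (D J ψ : ℝ → ℝ → ℝ)
    (hγ : ∀ b, γ b = (Φ - ρ)/(Φ*Real.exp (Φ*b) - ρ*Real.exp (ρ*b)))
    (hθf : ∀ b, θf b = (Real.exp (Φ*b) - Real.exp (ρ*b))/(Φ*Real.exp (Φ*b) - ρ*Real.exp (ρ*b)))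
    (hm : ∀ a, m a = (1 - Real.exp (-(μ/α)*a)*((μ/α)*a + 1))/(μ/α))
    (hD : ∀ a b, D a b = q + (μ/α)*q*θf b + lam*Real.exp (-(μ/α)*a))
    (hJ : ∀ a b, J a b = (c*γ b - lam*k*m a)/(D a b))
    (hψ : ∀ a b, ψ a b = -(a*k*(q + q*(μ/α)*θf b)) + c*γ b + lam*k*(Real.exp (-(μ/α)*a) - 1)/(μ/α)) :
    ∀ astar bstar : ℝ, 0 < astar → 0 < bstar →
      deriv (fun a => J a bstar) astar = 0 →
      deriv (fun b => J astar b) bstar = 0 →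
      deriv (fun b => deriv (fun a => J a b) astar) bstar = 0 ∧
      deriv (fun a => deriv (fun b => J a b) bstar) astar = 0 :=
  stmt18_general c α lam q μ k hα0 hlam hq hμ Φ ρ hΦpos hρneg γ θf m D J hγ hθf hm hD hJ
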